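/- arXiv:math/0203261 — 3 statements merged into one kernel-verified Lean document; each statement's English description precedes it below -/
import Mathlib

section
/- Let K be a field, R a unital amenable affine K-algebra with a fixed Følner exhaustion {W_n}, and ω a nonprincipal ultrafilter on ℕ. Let M be a finitely generated left R-module. If {x_1, …, x_r} and {y_1, …, y_s} are two generating systems of M, then lim_ω dim_K(W_nx_1 + ⋯ + W_nx_r)/dim_K(W_n) = lim_ω dim_K(W_ny_1 + ⋯ + W_ny_s)/dim_K(W_n); moreover this common value (the rank of M) is at most the minimal number of elements generating M. -/
open Filter Module

/-- `W·r`: the image of the finite dimensional subspace `W` under right multiplication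
by `r`. -/
noncomputable def rightMulSubmodule (K : Type*) [Field K] {R : Type*} [Ring R] [Algebra K R]
    (W : Submodule K R) (r : R) : Submodule K R :=
  W.map (LinearMap.mulRight K r)

/-- A Følner exhaustion of a `K`-algebra `R`: an increasing sequence of finite dimensional
subspaces exhausting `R` such that for every `r ∈ R`,
`dim (Wₙ·r + Wₙ) / dim Wₙ → 1`. -/
def FolnerExhaustion (K : Type*) [Field K] (R : Type*) [Ring R] [Algebra K R]
    (W : ℕ → Submodule K R) : Prop :=
  Monotone W ∧ (∀ n, FiniteDimensional K (W n)) ∧ (∀ x : R, ∃ n, x ∈ W n) ∧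
    ∀ r : R,
      Tendsto (fun n => (finrank K ↥(rightMulSubmodule K (W n) r ⊔ W n) : ℝ) / finrank K (W n))
        atTop (nhds 1)

/-- An affine algebra is (left) amenable if it admits a Følner exhaustion. -/
def AmenableAlgebra (K : Type*) [Field K] (R : Type*) [Ring R] [Algebra K R] : Prop :=
  ∃ W : ℕ → Submodule K R, FolnerExhaustion K R W


/-- The ultralimit of a real sequence along an ultrafilter `ω`: the limit of the sequence
along `ω` (for bounded sequences this limit exists and is unique). -/
noncomputable def ultralim (ω : Ultrafilter ℕ) (f : ℕ → ℝ) : ℝ :=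
  limUnder (ω : Filter ℕ) f

/-- The sequence `n ↦ dim_K(Wₙx₁ + ⋯ + Wₙx_r) / dim_K(Wₙ)` attached to a family of elements
`x₁, …, x_r` of a left `R`-module `M`, where `Wₙ·x = {wx : w ∈ Wₙ}`. -/
noncomputable def rankSeq (K : Type*) [Field K] (R : Type*) [Ring R] [Algebra K R]
    (W : ℕ → Submodule K R) {M : Type*} [AddCommGroup M] [Module K M] [Module R M]
    [IsScalarTower K R M] {r : ℕ} (x : Fin r → M) (n : ℕ) : ℝ :=
  (finrank K ↥(⨆ i, (W n).map ((LinearMap.toSpanSingleton R M (x i)).restrictScalars K)) : ℝ) /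
    finrank K (W n)

/-! If `x` generates `M`, write every `yⱼ = ∑ᵢ aⱼᵢ xᵢ`. Then `Wₙ yⱼ ⊆ ∑ᵢ Uₙ xᵢ` with
`Uₙ = Wₙ + ∑ⱼᵢ Wₙ aⱼᵢ`, and `dim ∑ᵢ Uₙ xᵢ ≤ dim ∑ᵢ Wₙ xᵢ + r (dim Uₙ - dim Wₙ)`. By the Følner
condition `dim Uₙ / dim Wₙ → 1`, so the ratio for `y` is at most the ratio for `x` plus an error
tending to `0`, and passing to the ultralimit gives `rank y ≤ rank x`. Symmetry gives equality,
and the bound by the number of generators comes from `dim ∑ᵢ Wₙ zᵢ ≤ t · dim Wₙ`. -/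

namespace Submodule

variable {K V N : Type*} [Field K] [AddCommGroup V] [Module K V] [AddCommGroup N] [Module K N]

theorem finrank_finset_sup_le_sum {ι : Type*} (s : Finset ι) (B : ι → Submodule K V)
    [∀ i, FiniteDimensional K (B i)] :
    finrank K ↥(s.sup B) ≤ ∑ i ∈ s, finrank K (B i) := by
  classical
  induction s using Finset.induction with
  | empty => simp
  | insert a s ha ih =>
    rw [Finset.sup_insert, Finset.sum_insert ha]
    exact (finrank_add_le_finrank_add_finrank _ _).trans (Nat.add_le_add_left ih _)

theorem finrank_iSup_map_le_card_mul {ι : Type*} [Fintype ι] (W : Submodule K V)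
    [FiniteDimensional K W] (f : ι → V →ₗ[K] N) :
    finrank K ↥(⨆ i, W.map (f i)) ≤ Fintype.card ι * finrank K W := by
  rw [← Finset.sup_univ_eq_iSup]
  calc finrank K ↥(Finset.univ.sup fun i => W.map (f i))
      ≤ ∑ i, finrank K ↥(W.map (f i)) := finrank_finset_sup_le_sum _ _
    _ ≤ ∑ _i : ι, finrank K W := Finset.sum_le_sum fun i _ => finrank_map_le _ _
    _ = Fintype.card ι * finrank K W := by simp

/-- A relative complement of `A` in `B`, obtained by cutting down a complement of `A` in `V`
with the modular law. -/
theorem exists_sup_eq_and_finrank_add_eq {A B : Submodule K V} (hAB : A ≤ B)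
    [FiniteDimensional K B] :
    ∃ C : Submodule K V, A ⊔ C = B ∧ finrank K A + finrank K C = finrank K B := by
  obtain ⟨A', hA'⟩ := A.exists_isCompl
  have hsup : A ⊔ A' ⊓ B = B := by
    rw [← sup_inf_assoc_of_le A' hAB, hA'.codisjoint.eq_top, top_inf_eq]
  have : FiniteDimensional K A := finiteDimensional_of_le hAB
  have : FiniteDimensional K ↥(A' ⊓ B) := finiteDimensional_of_le inf_le_right
  refine ⟨A' ⊓ B, hsup, ?_⟩
  have hinf : A ⊓ (A' ⊓ B) = ⊥ := (hA'.disjoint.mono_right inf_le_left).eq_bot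
  have h := finrank_sup_add_finrank_inf_eq A (A' ⊓ B)
  rw [hsup, hinf, finrank_bot, add_zero] at h
  exact h.symm

theorem finrank_iSup_map_add_le {ι : Type*} [Fintype ι] {A B : Submodule K V} (hAB : A ≤ B)
    [FiniteDimensional K B] (f : ι → V →ₗ[K] N) :
    finrank K ↥(⨆ i, B.map (f i)) + Fintype.card ι * finrank K A ≤
      finrank K ↥(⨆ i, A.map (f i)) + Fintype.card ι * finrank K B := by
  obtain ⟨C, hC, hrank⟩ := exists_sup_eq_and_finrank_add_eq hAB
  have : FiniteDimensional K A := finiteDimensional_of_le hAB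
  have : FiniteDimensional K C := finiteDimensional_of_le (hC ▸ le_sup_right)
  have hsplit : ⨆ i, B.map (f i) = (⨆ i, A.map (f i)) ⊔ ⨆ i, C.map (f i) := by
    simp only [← hC, map_sup, iSup_sup_eq]
  have hle := finrank_add_le_finrank_add_finrank (⨆ i, A.map (f i)) (⨆ i, C.map (f i))
  have hC := finrank_iSup_map_le_card_mul C f
  rw [← hsplit] at hle
  rw [← hrank, mul_add]
  omega

theorem finrank_finset_sup_sup_add_le {ι : Type*} (s : Finset ι) (B : ι → Submodule K V)
    [∀ i, FiniteDimensional K (B i)] (W : Submodule K V) [FiniteDimensional K W] :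
    finrank K ↥(s.sup B ⊔ W) + s.card * finrank K W ≤
      finrank K W + ∑ i ∈ s, finrank K ↥(B i ⊔ W) := by
  classical
  induction s using Finset.induction with
  | empty =>
    simpa using finrank_mono (sup_le (by simp) le_rfl : (∅ : Finset ι).sup B ⊔ W ≤ W)
  | insert a s ha ih =>
    have hsplit : (insert a s).sup B ⊔ W = (B a ⊔ W) ⊔ (s.sup B ⊔ W) := by
      rw [Finset.sup_insert, sup_sup_distrib_right]
    have hmod := finrank_sup_add_finrank_inf_eq (B a ⊔ W) (s.sup B ⊔ W)
    have hW : finrank K W ≤ finrank K ↥((B a ⊔ W) ⊓ (s.sup B ⊔ W)) :=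
      finrank_mono (le_inf le_sup_right le_sup_right)
    rw [hsplit, Finset.sum_insert ha, Finset.card_insert_of_notMem ha, add_one_mul]
    omega

end Submodule

section Module

variable {K R M : Type*} [Field K] [Ring R] [Algebra K R] [AddCommGroup M] [Module K M]
  [Module R M] [IsScalarTower K R M]

variable (K) in
/-- `W x₁ + ⋯ + W xᵣ`, so that `rankSeq K R W x n = dim (smulSpan K (W n) x) / dim (W n)`. -/
noncomputable def smulSpan (W : Submodule K R) {ι : Type*} (x : ι → M) : Submodule K M :=
  ⨆ i, W.map ((LinearMap.toSpanSingleton R M (x i)).restrictScalars K)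

instance (W : Submodule K R) [FiniteDimensional K W] (r : R) :
    FiniteDimensional K (rightMulSubmodule K W r) := by
  unfold rightMulSubmodule; infer_instance

instance {ι : Type*} [Finite ι] (W : Submodule K R) [FiniteDimensional K W] (x : ι → M) :
    FiniteDimensional K (smulSpan K W x) := by
  unfold smulSpan; infer_instance

theorem smulSpan_le_of_eq_sum {ι κ : Type*} [Fintype ι] {W U : Submodule K R}
    {x : ι → M} {y : κ → M} (a : κ → ι → R) (hy : ∀ j, ∑ i, a j i • x i = y j)
    (hU : ∀ j i, rightMulSubmodule K W (a j i) ≤ U) :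
    smulSpan K W y ≤ smulSpan K U x := by
  refine iSup_le fun j => ?_
  rintro _ ⟨w, hw, rfl⟩
  have hwy : w • y j = ∑ i, (w * a j i) • x i := by
    simp only [← hy j, Finset.smul_sum, smul_smul]
  simp only [LinearMap.coe_restrictScalars, LinearMap.toSpanSingleton_apply, hwy]
  refine sum_mem fun i _ => Submodule.mem_iSup_of_mem i ⟨w * a j i, hU j i ⟨w, hw, rfl⟩, ?_⟩
  simp

theorem finrank_smulSpan_le_card_mul {ι : Type*} [Fintype ι] (W : Submodule K R)
    [FiniteDimensional K W] (x : ι → M) :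
    finrank K (smulSpan K W x) ≤ Fintype.card ι * finrank K W :=
  Submodule.finrank_iSup_map_le_card_mul W _

theorem finrank_smulSpan_le_add {ι κ : Type*} [Fintype ι] [Fintype κ] (W : Submodule K R)
    [FiniteDimensional K W] {x : ι → M} {y : κ → M} (a : κ → ι → R)
    (hy : ∀ j, ∑ i, a j i • x i = y j) :
    (finrank K (smulSpan K W y) : ℝ) ≤ finrank K (smulSpan K W x) +
      Fintype.card ι * ∑ p : κ × ι,
        ((finrank K ↥(rightMulSubmodule K W (a p.1 p.2) ⊔ W) : ℝ) - finrank K W) := by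
  classical
  set B : κ × ι → Submodule K R := fun p => rightMulSubmodule K W (a p.1 p.2)
  set U := Finset.univ.sup B ⊔ W
  have hWU : W ≤ U := le_sup_right
  have hyU : smulSpan K W y ≤ smulSpan K U x :=
    smulSpan_le_of_eq_sum a hy fun j i =>
      le_sup_of_le_left (Finset.le_sup (f := B) (Finset.mem_univ (j, i)))
  have hUx := Submodule.finrank_iSup_map_add_le hWU
    fun i => (LinearMap.toSpanSingleton R M (x i)).restrictScalars K
  have hU := Submodule.finrank_finset_sup_sup_add_le Finset.univ B W
  simp only [Finset.card_univ] at hU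
  rw [Finset.sum_sub_distrib, Finset.sum_const, Finset.card_univ, nsmul_eq_mul]
  have hUℝ : (finrank K U : ℝ) + Fintype.card (κ × ι) * finrank K W ≤
      finrank K W + ∑ p, (finrank K ↥(B p ⊔ W) : ℝ) := by exact_mod_cast hU
  have hUxℝ : (finrank K (smulSpan K U x) : ℝ) + Fintype.card ι * finrank K W ≤
      finrank K (smulSpan K W x) + Fintype.card ι * finrank K U := by exact_mod_cast hUx
  have hyUℝ : (finrank K (smulSpan K W y) : ℝ) ≤ finrank K (smulSpan K U x) := by
    exact_mod_cast Submodule.finrank_mono hyU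
  linarith [mul_le_mul_of_nonneg_left hUℝ (Nat.cast_nonneg (Fintype.card ι))]

theorem rankSeq_mem_Icc (W : ℕ → Submodule K R) {r : ℕ} (x : Fin r → M) (n : ℕ) :
    rankSeq K R W x n ∈ Set.Icc (0 : ℝ) r := by
  refine ⟨by unfold rankSeq; positivity, ?_⟩
  rcases (finrank K (W n)).eq_zero_or_pos with h | h
  · simp [rankSeq, h]
  · have : FiniteDimensional K (W n) := Module.finite_of_finrank_pos h
    rw [rankSeq, div_le_iff₀ (by exact_mod_cast h)]
    exact_mod_cast (finrank_smulSpan_le_card_mul (W n) x).trans_eq (by simp)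

theorem tendsto_ultralim_rankSeq (ω : Ultrafilter ℕ) (W : ℕ → Submodule K R) {r : ℕ}
    (x : Fin r → M) :
    Tendsto (rankSeq K R W x) ω (nhds (ultralim ω (rankSeq K R W x))) := by
  obtain ⟨a, -, ha⟩ := (isCompact_Icc (a := (0 : ℝ)) (b := r)).ultrafilter_le_nhds
    (ω.map (rankSeq K R W x))
    (tendsto_principal.2 (.of_forall (rankSeq_mem_Icc W x)))
  exact tendsto_nhds_limUnder ⟨a, ha⟩

namespace FolnerExhaustion

variable {W : ℕ → Submodule K R}

theorem eventually_finrank_pos (hW : FolnerExhaustion K R W) :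
    ∀ᶠ n in atTop, 0 < finrank K (W n) := by
  filter_upwards [(hW.2.2.2 1).eventually (lt_mem_nhds one_pos)] with n hn
  exact Nat.pos_of_ne_zero fun h => by simp [h] at hn

/-- Writing `yⱼ = ∑ᵢ aⱼᵢ xᵢ`, the error term is `r · ∑ⱼᵢ (dim (Wₙ aⱼᵢ + Wₙ) / dim Wₙ - 1)`,
which tends to `0` by the Følner condition. -/
theorem exists_rankSeq_le_add (hW : FolnerExhaustion K R W) {r s : ℕ} {x : Fin r → M}
    (hx : Submodule.span R (Set.range x) = ⊤) (y : Fin s → M) :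
    ∃ e : ℕ → ℝ, Tendsto e atTop (nhds 0) ∧
      ∀ᶠ n in atTop, rankSeq K R W y n ≤ rankSeq K R W x n + e n := by
  choose a ha using fun j => (Submodule.mem_span_range_iff_exists_fun R).mp
    (hx ▸ Submodule.mem_top : y j ∈ Submodule.span R (Set.range x))
  have := hW.2.1
  refine ⟨fun n => r * ∑ p : Fin s × Fin r,
    ((finrank K ↥(rightMulSubmodule K (W n) (a p.1 p.2) ⊔ W n) : ℝ) / finrank K (W n) - 1),
    ?_, ?_⟩
  · simpa using (tendsto_finsetSum Finset.univ fun (p : Fin s × Fin r) _ =>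
      (hW.2.2.2 (a p.1 p.2)).sub_const 1).const_mul (r : ℝ)
  · filter_upwards [hW.eventually_finrank_pos] with n hn
    have hD : (0 : ℝ) < finrank K (W n) := by exact_mod_cast hn
    have key := finrank_smulSpan_le_add (W n) a ha
    rw [Fintype.card_fin] at key
    calc rankSeq K R W y n ≤ (finrank K (smulSpan K (W n) x) + r * ∑ p : Fin s × Fin r,
          ((finrank K ↥(rightMulSubmodule K (W n) (a p.1 p.2) ⊔ W n) : ℝ) - finrank K (W n))) /
          finrank K (W n) := div_le_div_of_nonneg_right key hD.le
      _ = _ := by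
        rw [add_div, mul_div_assoc, Finset.sum_div]
        simp only [sub_div, div_self hD.ne']
        rfl

theorem ultralim_rankSeq_le (hW : FolnerExhaustion K R W) {ω : Ultrafilter ℕ}
    (hω : (ω : Filter ℕ) ≤ cofinite) {r s : ℕ} {x : Fin r → M}
    (hx : Submodule.span R (Set.range x) = ⊤) (y : Fin s → M) :
    ultralim ω (rankSeq K R W y) ≤ ultralim ω (rankSeq K R W x) := by
  obtain ⟨e, he, hle⟩ := hW.exists_rankSeq_le_add hx y
  rw [Nat.cofinite_eq_atTop] at hω
  have hxe := (tendsto_ultralim_rankSeq ω W x).add (he.mono_left hω)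
  rw [add_zero] at hxe
  exact le_of_tendsto_of_tendsto (tendsto_ultralim_rankSeq ω W y) hxe (hω hle)

end FolnerExhaustion

end Module

theorem rank_well_defined_general (K : Type*) [Field K] (R : Type*) [Ring R] [Algebra K R]
    (W : ℕ → Submodule K R) (hW : FolnerExhaustion K R W)
    (ω : Ultrafilter ℕ) (hω : (ω : Filter ℕ) ≤ Filter.cofinite)
    (M : Type*) [AddCommGroup M] [Module K M] [Module R M] [IsScalarTower K R M]
    {r s : ℕ} (x : Fin r → M) (y : Fin s → M)
    (hx : Submodule.span R (Set.range x) = ⊤)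
    (hy : Submodule.span R (Set.range y) = ⊤) :
    ultralim ω (rankSeq K R W x) = ultralim ω (rankSeq K R W y) ∧
    ∀ (t : ℕ) (z : Fin t → M), Submodule.span R (Set.range z) = ⊤ →
      ultralim ω (rankSeq K R W x) ≤ t := by
  refine ⟨le_antisymm (hW.ultralim_rankSeq_le hω hy x) (hW.ultralim_rankSeq_le hω hx y),
    fun t z hz => ?_⟩
  calc ultralim ω (rankSeq K R W x) ≤ ultralim ω (rankSeq K R W z) :=
        hW.ultralim_rankSeq_le hω hz x
    _ ≤ t :=
        le_of_tendsto' (tendsto_ultralim_rankSeq ω W z) fun n => (rankSeq_mem_Icc W z n).2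

/-- The rank of a finitely generated module over a unital amenable affine algebra is well
defined: it does not depend on the choice of the generating system, and it is bounded by the
minimal number of generators. -/
theorem rank_well_defined (K : Type*) [Field K] (R : Type*) [Ring R] [Algebra K R]
    [Algebra.FiniteType K R]
    (W : ℕ → Submodule K R) (hW : FolnerExhaustion K R W)
    (ω : Ultrafilter ℕ) (hω : (ω : Filter ℕ) ≤ Filter.cofinite)
    (M : Type*) [AddCommGroup M] [Module K M] [Module R M] [IsScalarTower K R M]
    {r s : ℕ} (x : Fin r → M) (y : Fin s → M)
    (hx : Submodule.span R (Set.range x) = ⊤)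
    (hy : Submodule.span R (Set.range y) = ⊤) :
    ultralim ω (rankSeq K R W x) = ultralim ω (rankSeq K R W y) ∧
    ∀ (t : ℕ) (z : Fin t → M), Submodule.span R (Set.range z) = ⊤ →
      ultralim ω (rankSeq K R W x) ≤ t :=
  rank_well_defined_general K R W hW ω hω M x y hx hy
end

section
/- Let K be a field and let R be a unital amenable affine K-algebra. Then R has the unique rank property (invariant basis number): for natural numbers n and m, if the free left R-modules R^n and R^m are isomorphic as R-modules, then n = m. -/
open Filter Module

/-- The natural equivalence between `Submodule.pi Set.univ p` and the product of the `p i`. -/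
noncomputable def piSubEquiv {K M : Type*} [Field K] [AddCommGroup M] [Module K M]
    {ι : Type*} (p : ι → Submodule K M) :
    (Submodule.pi Set.univ p) ≃ₗ[K] (∀ i, p i) where
  toFun x i := ⟨x.1 i, x.2 i (Set.mem_univ i)⟩
  invFun f := ⟨fun i => f i, fun i _ => (f i).2⟩
  map_add' _ _ := rfl
  map_smul' _ _ := rfl
  left_inv _ := rfl
  right_inv _ := rfl

theorem finrank_piSub {K M : Type*} [Field K] [AddCommGroup M] [Module K M]
    {ι : Type*} [Fintype ι] (p : ι → Submodule K M) [∀ i, FiniteDimensional K (p i)] :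
    finrank K (Submodule.pi Set.univ p) = ∑ i, finrank K (p i) := by
  rw [(piSubEquiv p).finrank_eq, Module.finrank_pi_fintype]

/-- Submodularity of `finrank` applied to a finite supremum of subspaces containing `W`. -/
theorem finrank_sup_finset_le {K M : Type*} [Field K] [AddCommGroup M] [Module K M]
    {ι : Type*} (s : Finset ι) (V : ι → Submodule K M) (W : Submodule K M)
    [FiniteDimensional K W] [∀ i, FiniteDimensional K (V i)]
    (hle : ∀ i, W ≤ V i) :
    finrank K ↥(s.sup V ⊔ W) + s.card * finrank K W
      ≤ finrank K W + ∑ i ∈ s, finrank K (V i) := by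
  classical
  induction s using Finset.induction_on with
  | empty => rw [Finset.sup_empty, bot_sup_eq]; simp
  | insert a s ha ih =>
    rw [Finset.sup_insert, sup_assoc, Finset.sum_insert ha, Finset.card_insert_of_notMem ha]
    set X : Submodule K M := s.sup V ⊔ W with hX
    have h1 : finrank K ↥(V a ⊔ X) + finrank K ↥(V a ⊓ X) =
        finrank K (V a) + finrank K X := Submodule.finrank_sup_add_finrank_inf_eq _ _
    have h2 : finrank K W ≤ finrank K ↥(V a ⊓ X) := by
      haveI : FiniteDimensional K ↥(V a ⊓ X) :=
        Submodule.finiteDimensional_inf_left _ _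
      exact Submodule.finrank_mono (le_inf (hle a) le_sup_right)
    rw [add_one_mul]
    omega

/-- The key asymmetric estimate: a Følner exhaustion forces `n ≤ m` whenever
`Rⁿ ≅ Rᵐ`. -/
theorem folner_le {K : Type*} [Field K] {R : Type*} [Ring R] [Algebra K R]
    {W : ℕ → Submodule K R} (hW : FolnerExhaustion K R W) {n m : ℕ}
    (e : (Fin n → R) ≃ₗ[R] (Fin m → R)) : n ≤ m := by
  classical
  obtain ⟨-, hfd, -, htend⟩ := hW
  haveI := hfd
  haveI hrm : ∀ (k : ℕ) (r : R), FiniteDimensional K (rightMulSubmodule K (W k) r) :=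
    fun k r => Module.Finite.map (W k) (LinearMap.mulRight K r)
  set a : Fin n × Fin m → R := fun p => e (Pi.single p.1 1) p.2 with ha
  -- key formula for the isomorphism
  have key : ∀ (x : Fin n → R) (j : Fin m), e x j = ∑ i, x i * a (i, j) := by
    intro x j
    have hx : x = ∑ i, x i • (Pi.single i (1 : R) : Fin n → R) := by
      funext l
      simp [Finset.sum_apply, Pi.single_apply]
    conv_lhs => rw [hx]
    rw [map_sum, Finset.sum_apply]
    simp [ha, smul_eq_mul]
  set V : ℕ → Submodule K R := fun k =>
    (Finset.univ.sup fun p : Fin n × Fin m =>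
      rightMulSubmodule K (W k) (a p) ⊔ W k) ⊔ W k with hV
  haveI hVfd : ∀ k, FiniteDimensional K (V k) := fun k => by
    rw [hV]; infer_instance
  -- Claim 1 : n · dim W_k ≤ m · dim V_k
  have claim1 : ∀ k, n * finrank K (W k) ≤ m * finrank K (V k) := by
    intro k
    set U : Submodule K (Fin n → R) := Submodule.pi Set.univ (fun _ : Fin n => W k) with hU
    haveI : FiniteDimensional K U := (piSubEquiv _).symm.finiteDimensional
    set f : (Fin n → R) →ₗ[K] Fin m → R := (e.restrictScalars K).toLinearMap with hf
    have hinj : Function.Injective f := (e.restrictScalars K).injective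
    have hmap : U.map f ≤ Submodule.pi Set.univ (fun _ : Fin m => V k) := by
      rintro _ ⟨x, hx, rfl⟩ j -
      have hfx : f x = e x := rfl
      rw [hfx, key]
      refine Submodule.sum_mem _ fun i _ => ?_
      have hmem : x i * a (i, j) ∈ rightMulSubmodule K (W k) (a (i, j)) :=
        ⟨x i, hx i (Set.mem_univ i), rfl⟩
      have hle : rightMulSubmodule K (W k) (a (i, j)) ≤ V k := by
        calc rightMulSubmodule K (W k) (a (i, j))
            ≤ rightMulSubmodule K (W k) (a (i, j)) ⊔ W k := le_sup_left
          _ ≤ Finset.univ.sup (fun p : Fin n × Fin m =>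
              rightMulSubmodule K (W k) (a p) ⊔ W k) :=
            Finset.le_sup (f := fun p : Fin n × Fin m =>
              rightMulSubmodule K (W k) (a p) ⊔ W k) (Finset.mem_univ (i, j))
          _ ≤ V k := le_sup_left
      exact hle hmem
    haveI : FiniteDimensional K (Submodule.pi Set.univ (fun _ : Fin m => V k)) :=
      (piSubEquiv _).symm.finiteDimensional
    calc n * finrank K (W k) = finrank K U := by
          rw [hU, finrank_piSub]; simp [Finset.sum_const, Finset.card_univ]
      _ = finrank K (U.map f) := (Submodule.equivMapOfInjective f hinj U).finrank_eq
      _ ≤ finrank K (Submodule.pi Set.univ (fun _ : Fin m => V k)) :=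
          Submodule.finrank_mono hmap
      _ = m * finrank K (V k) := by
          rw [finrank_piSub]; simp [Finset.sum_const, Finset.card_univ]
  -- Claim 2 : submodularity bound for dim V_k
  have claim2 : ∀ k, finrank K (V k) + (n * m) * finrank K (W k)
      ≤ finrank K (W k) + ∑ p : Fin n × Fin m,
          finrank K ↥(rightMulSubmodule K (W k) (a p) ⊔ W k) := by
    intro k
    have := finrank_sup_finset_le Finset.univ
      (fun p : Fin n × Fin m => rightMulSubmodule K (W k) (a p) ⊔ W k) (W k)
      (fun p => le_sup_right)
    simpa [Finset.card_univ] using this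
  -- eventually the Følner sets are nonzero
  have hD : ∀ᶠ k in atTop, 1 ≤ finrank K (W k) := by
    have h1 := (htend 1).eventually (eventually_gt_nhds (by norm_num : (0:ℝ) < 1))
    filter_upwards [h1] with k hk
    by_contra hcon
    have h0 : finrank K (W k) = 0 := by omega
    rw [h0] at hk
    simp at hk
  -- the eventual real inequality
  have hineq : ∀ᶠ k in atTop, (n : ℝ) ≤ (m : ℝ) * (1 + ∑ p : Fin n × Fin m,
      ((finrank K ↥(rightMulSubmodule K (W k) (a p) ⊔ W k) : ℝ) / finrank K (W k) - 1)) := by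
    filter_upwards [hD] with k hk
    have hDpos : (0 : ℝ) < (finrank K (W k) : ℝ) := by exact_mod_cast hk
    have h1 : (n : ℝ) * finrank K (W k) ≤ m * finrank K (V k) := by
      exact_mod_cast claim1 k
    have h2 : (finrank K (V k) : ℝ) + (n * m) * finrank K (W k)
        ≤ finrank K (W k) + ∑ p : Fin n × Fin m,
            (finrank K ↥(rightMulSubmodule K (W k) (a p) ⊔ W k) : ℝ) := by
      exact_mod_cast claim2 k
    set D : ℝ := (finrank K (W k) : ℝ)
    set S : ℝ := ∑ p : Fin n × Fin m,
      (finrank K ↥(rightMulSubmodule K (W k) (a p) ⊔ W k) : ℝ) with hS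
    have hsum : ∑ p : Fin n × Fin m,
        ((finrank K ↥(rightMulSubmodule K (W k) (a p) ⊔ W k) : ℝ) / D - 1)
        = S / D - (n * m) := by
      rw [Finset.sum_sub_distrib, ← Finset.sum_div, ← hS]
      simp [Finset.card_univ]
    rw [hsum]
    have hm : (0:ℝ) ≤ m := Nat.cast_nonneg m
    have hds : S / D * D = S := div_mul_cancel₀ S (ne_of_gt hDpos)
    refine le_of_mul_le_mul_right ?_ hDpos
    have hexp : ((1:ℝ) + (S / D - n * m)) * D = D + S - n * m * D := by
      rw [add_mul, one_mul, sub_mul, hds]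
      ring
    rw [mul_assoc, hexp]
    have h3 : (finrank K (V k) : ℝ) ≤ D + S - (n:ℝ) * m * D := by linarith
    have h4 : (m:ℝ) * (finrank K (V k) : ℝ) ≤ m * (D + S - (n:ℝ) * m * D) :=
      mul_le_mul_of_nonneg_left h3 hm
    linarith
  -- limit of the right-hand side is m
  have hlim : Tendsto (fun k => (m : ℝ) * (1 + ∑ p : Fin n × Fin m,
      ((finrank K ↥(rightMulSubmodule K (W k) (a p) ⊔ W k) : ℝ) / finrank K (W k) - 1)))
      atTop (nhds m) := by
    have hsum0 : Tendsto (fun k => ∑ p : Fin n × Fin m,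
        ((finrank K ↥(rightMulSubmodule K (W k) (a p) ⊔ W k) : ℝ) / finrank K (W k) - 1))
        atTop (nhds 0) := by
      have : Tendsto (fun k => ∑ p : Fin n × Fin m,
          ((finrank K ↥(rightMulSubmodule K (W k) (a p) ⊔ W k) : ℝ) / finrank K (W k) - 1))
          atTop (nhds (∑ _p : Fin n × Fin m, (0:ℝ))) := by
        refine tendsto_finset_sum _ fun p _ => ?_
        simpa using (htend (a p)).sub (tendsto_const_nhds (x := (1:ℝ)))
      simpa using this
    have := ((tendsto_const_nhds (x := (1:ℝ))).add hsum0).const_mul (m : ℝ)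
    simpa using this
  have : (n : ℝ) ≤ (m : ℝ) := ge_of_tendsto hlim hineq
  exact_mod_cast this

/-- A unital amenable affine algebra has the unique rank property (invariant basis number):
`Rⁿ ≅ Rᵐ` as left `R`-modules implies `n = m`. -/
theorem amenable_unique_rank (K : Type*) [Field K] (R : Type*) [Ring R] [Algebra K R]
    [Algebra.FiniteType K R]
    (hR : AmenableAlgebra K R) (n m : ℕ)
    (h : Nonempty ((Fin n → R) ≃ₗ[R] (Fin m → R))) : n = m := by
  obtain ⟨W, hW⟩ := hR
  obtain ⟨e⟩ := h
  exact le_antisymm (folner_le hW e) (folner_le hW e.symm)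
end

section
/- Let K be a field, R a unital amenable affine K-algebra with a fixed Følner exhaustion {W_n}, ω a nonprincipal ultrafilter on ℕ, and let rank denote the associated rank function on finitely generated left R-modules. Then: (i) if M and N are finitely generated R-modules and M is either a submodule of N or a homomorphic image of N, then rank(M) ≤ rank(N); and (ii) for finitely generated R-modules M and N, rank(M ⊕ N) = rank(M) + rank(N). -/
open Filter Module

/-! ### Auxiliary linear algebra lemmas -/

section LinearAlgebra

variable {K : Type*} [Field K] {V : Type*} [AddCommGroup V] [Module K V]
  {V' : Type*} [AddCommGroup V'] [Module K V']

/-- Key exchange inequality: replacing `B` by a smaller `A` in a sup. -/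
lemma aux_sup (A B C : Submodule K V) [FiniteDimensional K B] [FiniteDimensional K C]
    (hAB : A ≤ B) :
    finrank K ↥(B ⊔ C) + finrank K ↥A ≤ finrank K ↥(A ⊔ C) + finrank K ↥B := by
  haveI := Submodule.finiteDimensional_of_le hAB
  have h := Submodule.finrank_sup_add_finrank_inf_eq (A ⊔ C) B
  have h1 : finrank K ↥(B ⊔ C) ≤ finrank K ↥((A ⊔ C) ⊔ B) :=
    Submodule.finrank_mono (sup_le le_sup_right (le_sup_of_le_left le_sup_right))
  have h2 : finrank K ↥A ≤ finrank K ↥((A ⊔ C) ⊓ B) :=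
    Submodule.finrank_mono (le_inf le_sup_left hAB)
  omega

/-- The loss of rank under a linear map is monotone in the subspace. -/
lemma aux_map (g : V →ₗ[K] V') (A B : Submodule K V) [FiniteDimensional K B] (hAB : A ≤ B) :
    finrank K ↥(B.map g) + finrank K ↥A ≤ finrank K ↥(A.map g) + finrank K ↥B := by
  haveI := Submodule.finiteDimensional_of_le hAB
  have hB := LinearMap.finrank_range_add_finrank_ker (g.domRestrict B)
  have hA := LinearMap.finrank_range_add_finrank_ker (g.domRestrict A)
  rw [LinearMap.range_domRestrict] at hB hA
  have ekA : finrank K ↥(LinearMap.ker (g.domRestrict A))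
      = finrank K ↥(LinearMap.ker g ⊓ A) := by
    rw [LinearMap.ker_domRestrict,
      show Submodule.comap A.subtype (LinearMap.ker g)
          = Submodule.comap A.subtype (LinearMap.ker g ⊓ A) by
        rw [Submodule.comap_inf, Submodule.comap_subtype_self, inf_top_eq]]
    exact (Submodule.comapSubtypeEquivOfLe inf_le_right).finrank_eq
  have ekB : finrank K ↥(LinearMap.ker (g.domRestrict B))
      = finrank K ↥(LinearMap.ker g ⊓ B) := by
    rw [LinearMap.ker_domRestrict,
      show Submodule.comap B.subtype (LinearMap.ker g)
          = Submodule.comap B.subtype (LinearMap.ker g ⊓ B) by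
        rw [Submodule.comap_inf, Submodule.comap_subtype_self, inf_top_eq]]
    exact (Submodule.comapSubtypeEquivOfLe inf_le_right).finrank_eq
  have hk : finrank K ↥(LinearMap.ker g ⊓ A) ≤ finrank K ↥(LinearMap.ker g ⊓ B) :=
    Submodule.finrank_mono (inf_le_inf_left _ hAB)
  omega

/-- Combination over a finite family of maps, with an extra ambient subspace `C`. -/
lemma aux_finset_sup_map {ι : Type*} [DecidableEq ι] (g : ι → (V →ₗ[K] V'))
    (A B : Submodule K V) [FiniteDimensional K B] (hAB : A ≤ B) (t : Finset ι)
    (C : Submodule K V') (hC : FiniteDimensional K C) :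
    finrank K ↥(C ⊔ t.sup fun i => B.map (g i)) + t.card * finrank K ↥A ≤
      finrank K ↥(C ⊔ t.sup fun i => A.map (g i)) + t.card * finrank K ↥B := by
  haveI := Submodule.finiteDimensional_of_le hAB
  induction t using Finset.induction_on generalizing C with
  | empty =>
    rw [Finset.sup_empty, Finset.sup_empty]
    simp
  | @insert q t hq ih =>
    haveI := hC
    haveI : FiniteDimensional K ↥(t.sup fun i => A.map (g i)) :=
      Submodule.finiteDimensional_finset_sup _ _
    haveI : FiniteDimensional K ↥(t.sup fun i => B.map (g i)) :=
      Submodule.finiteDimensional_finset_sup _ _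
    rw [Finset.sup_insert, Finset.sup_insert, Finset.card_insert_of_notMem hq]
    have e1 : C ⊔ ((B.map (g q)) ⊔ t.sup fun i => B.map (g i))
        = (C ⊔ B.map (g q)) ⊔ t.sup fun i => B.map (g i) := (sup_assoc _ _ _).symm
    have e2 : (C ⊔ B.map (g q)) ⊔ (t.sup fun i => A.map (g i))
        = B.map (g q) ⊔ (C ⊔ t.sup fun i => A.map (g i)) := by
      rw [sup_assoc, sup_left_comm]
    have e3 : A.map (g q) ⊔ (C ⊔ t.sup fun i => A.map (g i))
        = C ⊔ ((A.map (g q)) ⊔ t.sup fun i => A.map (g i)) := by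
      rw [sup_left_comm]
    have h1 := ih (C ⊔ B.map (g q)) inferInstance
    have h2 := aux_sup (A.map (g q)) (B.map (g q)) (C ⊔ t.sup fun i => A.map (g i))
      (Submodule.map_mono hAB)
    have h3 := aux_map (g q) A B hAB
    rw [e1]
    rw [e2] at h1
    rw [e3] at h2
    have eA : (t.card + 1) * finrank K ↥A = t.card * finrank K ↥A + finrank K ↥A := by ring
    have eB : (t.card + 1) * finrank K ↥B = t.card * finrank K ↥B + finrank K ↥B := by ring
    rw [eA, eB]
    linarith

/-- Følner-type bound: the sup of `W` with finitely many translates has controlled rank. -/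
lemma aux_folner_sup {R : Type*} [Ring R] [Algebra K R] (Wn : Submodule K R)
    [FiniteDimensional K Wn] {ι : Type*} [DecidableEq ι] (r : ι → R) (t : Finset ι) :
    finrank K ↥(Wn ⊔ t.sup fun p => rightMulSubmodule K Wn (r p)) + t.card * finrank K ↥Wn ≤
      finrank K ↥Wn + ∑ p ∈ t, finrank K ↥(rightMulSubmodule K Wn (r p) ⊔ Wn) := by
  haveI : ∀ s : R, FiniteDimensional K ↥(rightMulSubmodule K Wn s) := fun s => by
    unfold rightMulSubmodule; infer_instance
  induction t using Finset.induction_on with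
  | empty =>
    rw [Finset.sup_empty, sup_bot_eq]
    simp
  | @insert q t hq ih =>
    haveI : FiniteDimensional K ↥(t.sup fun p => rightMulSubmodule K Wn (r p)) :=
      Submodule.finiteDimensional_finset_sup _ _
    rw [Finset.sup_insert, Finset.card_insert_of_notMem hq, Finset.sum_insert hq]
    set Wq := rightMulSubmodule K Wn (r q) with hWq
    set S := t.sup fun p => rightMulSubmodule K Wn (r p) with hS
    have e1 : Wn ⊔ (Wq ⊔ S) = (Wq ⊔ Wn) ⊔ (Wn ⊔ S) := by
      apply le_antisymm
      · exact sup_le (le_sup_of_le_right le_sup_left)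
          (sup_le (le_sup_of_le_left le_sup_left) (le_sup_of_le_right le_sup_right))
      · exact sup_le (sup_le (le_sup_of_le_right le_sup_left) le_sup_left)
          (sup_le le_sup_left (le_sup_of_le_right le_sup_right))
    have e4 : Wn ⊔ (Wn ⊔ S) = Wn ⊔ S := by rw [← sup_assoc, sup_idem]
    have h := aux_sup Wn (Wq ⊔ Wn) (Wn ⊔ S) le_sup_right
    rw [e4] at h
    rw [e1]
    have eW : (t.card + 1) * finrank K ↥Wn = t.card * finrank K ↥Wn + finrank K ↥Wn := by ring
    rw [eW]
    linarith

/-- Splitting an `iSup` over `Fin (m + n)`. -/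
lemma iSup_fin_add {α : Type*} [CompleteLattice α] {m n : ℕ} (f : Fin (m + n) → α) :
    (⨆ k, f k) = (⨆ i : Fin m, f (Fin.castAdd n i)) ⊔ ⨆ j : Fin n, f (Fin.natAdd m j) := by
  refine le_antisymm (iSup_le fun k => ?_)
    (sup_le (iSup_le fun i => le_iSup f _) (iSup_le fun j => le_iSup f _))
  exact Fin.addCases (motive := fun k => f k ≤ _)
    (fun i => le_sup_of_le_left (le_iSup (fun i => f (Fin.castAdd n i)) i))
    (fun j => le_sup_of_le_right (le_iSup (fun j => f (Fin.natAdd m j)) j)) k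

end LinearAlgebra

/-! ### Main development -/

section Main

variable {K : Type*} [Field K] {R : Type*} [Ring R] [Algebra K R]
  {M : Type*} [AddCommGroup M] [Module K M] [Module R M] [IsScalarTower K R M]
  {N : Type*} [AddCommGroup N] [Module K N] [Module R N] [IsScalarTower K R N]
  {W : ℕ → Submodule K R}

instance rightMulSubmodule.instFiniteDimensional (Wn : Submodule K R) [FiniteDimensional K Wn]
    (r : R) : FiniteDimensional K ↥(rightMulSubmodule K Wn r) := by
  unfold rightMulSubmodule; infer_instance

/-- The numerator of `rankSeq` is at most `a · dim Wₙ`. -/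
lemma num_le (Wn : Submodule K R) [FiniteDimensional K Wn] {a : ℕ} (x : Fin a → M) :
    finrank K ↥(⨆ i, Wn.map ((LinearMap.toSpanSingleton R M (x i)).restrictScalars K))
      ≤ a * finrank K ↥Wn := by
  have h := aux_finset_sup_map
    (fun i => (LinearMap.toSpanSingleton R M (x i)).restrictScalars K)
    ⊥ Wn bot_le Finset.univ ⊥ inferInstance
  have e1 : (⊥ : Submodule K M) ⊔ (Finset.univ.sup fun i =>
      Wn.map ((LinearMap.toSpanSingleton R M (x i)).restrictScalars K))
      = ⨆ i, Wn.map ((LinearMap.toSpanSingleton R M (x i)).restrictScalars K) := by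
    rw [bot_sup_eq, Finset.sup_univ_eq_iSup]
  have e2 : (⊥ : Submodule K M) ⊔ (Finset.univ.sup fun i =>
      Submodule.map ((LinearMap.toSpanSingleton R M (x i)).restrictScalars K)
        (⊥ : Submodule K R)) = ⊥ := by
    simp
  rw [e1, e2, Finset.card_univ, Fintype.card_fin] at h
  simp only [finrank_bot] at h
  omega

lemma rankSeq_nonneg {a : ℕ} (x : Fin a → M) (n : ℕ) : 0 ≤ rankSeq K R W x n := by
  unfold rankSeq; positivity

lemma rankSeq_le_card (hfd : ∀ n, FiniteDimensional K (W n)) {a : ℕ} (x : Fin a → M) (n : ℕ) :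
    rankSeq K R W x n ≤ a := by
  haveI := hfd n
  unfold rankSeq
  have h := num_le (W n) x
  rcases Nat.eq_zero_or_pos (finrank K ↥(W n)) with h0 | h0
  · rw [h0]
    simp
  · rw [div_le_iff₀ (by exact_mod_cast h0)]
    exact_mod_cast h

/-- Bounded sequences converge along an ultrafilter to their ultralimit. -/
lemma tendsto_ultralim (ω : Ultrafilter ℕ) {f : ℕ → ℝ} {C : ℝ}
    (h0 : ∀ n, 0 ≤ f n) (hC : ∀ n, f n ≤ C) :
    Tendsto f (ω : Filter ℕ) (nhds (ultralim ω f)) := by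
  obtain ⟨L, -, hL⟩ := isCompact_iff_ultrafilter_le_nhds.mp
    (isCompact_Icc (a := (0:ℝ)) (b := C)) (ω.map f)
    (by
      rw [Ultrafilter.coe_map, le_principal_iff]
      exact Filter.mem_map.mpr (Filter.univ_mem' fun n => Set.mem_Icc.mpr ⟨h0 n, hC n⟩))
  rw [Ultrafilter.coe_map] at hL
  have hL' : Tendsto f (ω : Filter ℕ) (nhds L) := hL
  rw [ultralim, hL'.limUnder_eq]
  exact hL'

/-- The key pointwise estimate: if every `u j` is an `R`-linear combination of the `x i`
with coefficients `c j i`, then the rank sequence of `u` is bounded by that of `x` up to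
a Følner error term. -/
lemma key_pointwise (hfd : ∀ n, FiniteDimensional K (W n)) {a s : ℕ}
    (x : Fin a → M) (u : Fin s → M) (c : Fin s → Fin a → R)
    (hc : ∀ j, ∑ i, c j i • x i = u j) (n : ℕ) :
    rankSeq K R W u n ≤ rankSeq K R W x n +
      a * ((∑ p : Fin s × Fin a,
        ((finrank K ↥(rightMulSubmodule K (W n) (c p.1 p.2) ⊔ W n) : ℝ)
          - (finrank K ↥(W n) : ℝ))) / (finrank K ↥(W n) : ℝ)) := by
  haveI := hfd n
  unfold rankSeq
  by_cases hd : (finrank K ↥(W n) : ℝ) = 0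
  · rw [hd]
    simp
  have hdpos : (0:ℝ) < (finrank K ↥(W n) : ℝ) :=
    lt_of_le_of_ne (Nat.cast_nonneg _) (Ne.symm hd)
  set G : Fin a → (R →ₗ[K] M) :=
    fun i => (LinearMap.toSpanSingleton R M (x i)).restrictScalars K with hG
  set Gu : Fin s → (R →ₗ[K] M) :=
    fun j => (LinearMap.toSpanSingleton R M (u j)).restrictScalars K with hGu
  set Vn : Submodule K R := W n ⊔ Finset.univ.sup
    (fun p : Fin s × Fin a => rightMulSubmodule K (W n) (c p.1 p.2)) with hVn
  haveI : FiniteDimensional K ↥(Finset.univ.sup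
      (fun p : Fin s × Fin a => rightMulSubmodule K (W n) (c p.1 p.2))) :=
    Submodule.finiteDimensional_finset_sup _ _
  haveI : FiniteDimensional K ↥Vn := by rw [hVn]; infer_instance
  haveI : FiniteDimensional K ↥(Finset.univ.sup fun i => Vn.map (G i)) :=
    Submodule.finiteDimensional_finset_sup _ _
  -- Step 1: Følner bound on `Vn`
  have h1 := aux_folner_sup (W n) (fun p : Fin s × Fin a => c p.1 p.2) Finset.univ
  rw [Finset.card_univ, Fintype.card_prod, Fintype.card_fin, Fintype.card_fin] at h1
  rw [← hVn] at h1
  -- Step 2: the numerator of `u` is dominated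
  have h2 : finrank K ↥(⨆ j, (W n).map (Gu j))
      ≤ finrank K ↥(Finset.univ.sup fun i => Vn.map (G i)) := by
    apply Submodule.finrank_mono
    apply iSup_le
    intro j
    intro mm hmm
    obtain ⟨w, hw, rfl⟩ := Submodule.mem_map.mp hmm
    have hval : Gu j w = ∑ i, (w * c j i) • x i := by
      rw [show Gu j w = w • u j from rfl, ← hc j, Finset.smul_sum]
      exact Finset.sum_congr rfl fun i _ => smul_smul w (c j i) (x i)
    rw [hval]
    apply Submodule.sum_mem
    intro i _
    refine Finset.le_sup (f := fun i => Vn.map (G i)) (Finset.mem_univ i) ?_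
    refine Submodule.mem_map.mpr ⟨w * c j i, ?_, rfl⟩
    have hmem : w * c j i ∈ rightMulSubmodule K (W n) (c j i) :=
      Submodule.mem_map.mpr ⟨w, hw, rfl⟩
    have hsub : Finset.univ.sup
        (fun p : Fin s × Fin a => rightMulSubmodule K (W n) (c p.1 p.2)) ≤ Vn := by
      rw [hVn]; exact le_sup_right
    exact hsub
      (Finset.le_sup (f := fun p : Fin s × Fin a => rightMulSubmodule K (W n) (c p.1 p.2))
        (Finset.mem_univ ((j, i) : Fin s × Fin a)) hmem)
  -- Step 3: replace `Vn` by `W n` in the numerator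
  have h3 := aux_finset_sup_map G (W n) Vn le_sup_left Finset.univ ⊥ inferInstance
  have eb1 : (⊥ : Submodule K M) ⊔ (Finset.univ.sup fun i => Vn.map (G i))
      = Finset.univ.sup fun i => Vn.map (G i) := bot_sup_eq _
  have eb2 : (⊥ : Submodule K M) ⊔ (Finset.univ.sup fun i => (W n).map (G i))
      = ⨆ i, (W n).map (G i) := by rw [bot_sup_eq, Finset.sup_univ_eq_iSup]
  rw [eb1, eb2, Finset.card_univ, Fintype.card_fin] at h3
  -- Put everything together over ℝ
  have r1 : (finrank K ↥Vn : ℝ) + (s * a : ℕ) * (finrank K ↥(W n) : ℝ)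
      ≤ (finrank K ↥(W n) : ℝ) + ((∑ p : Fin s × Fin a,
        finrank K ↥(rightMulSubmodule K (W n) (c p.1 p.2) ⊔ W n) : ℕ) : ℝ) := by
    exact_mod_cast h1
  have r2 : ((finrank K ↥(⨆ j, (W n).map (Gu j)) : ℕ) : ℝ)
      ≤ ((finrank K ↥(Finset.univ.sup fun i => Vn.map (G i)) : ℕ) : ℝ) := by exact_mod_cast h2
  have r3 : ((finrank K ↥(Finset.univ.sup fun i => Vn.map (G i)) : ℕ) : ℝ)
      + (a : ℝ) * (finrank K ↥(W n) : ℝ)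
      ≤ ((finrank K ↥(⨆ i, (W n).map (G i)) : ℕ) : ℝ)
        + (a : ℝ) * (finrank K ↥Vn : ℝ) := by exact_mod_cast h3
  have eE : (∑ p : Fin s × Fin a,
      ((finrank K ↥(rightMulSubmodule K (W n) (c p.1 p.2) ⊔ W n) : ℝ)
        - (finrank K ↥(W n) : ℝ)))
      = ((∑ p : Fin s × Fin a,
          finrank K ↥(rightMulSubmodule K (W n) (c p.1 p.2) ⊔ W n) : ℕ) : ℝ)
        - ((s * a : ℕ) : ℝ) * (finrank K ↥(W n) : ℝ) := by
    rw [Finset.sum_sub_distrib, Finset.sum_const, Finset.card_univ, Fintype.card_prod,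
      Fintype.card_fin, Fintype.card_fin, nsmul_eq_mul]
    push_cast
    ring
  rw [eE]
  have key : ((finrank K ↥(⨆ j, (W n).map (Gu j)) : ℕ) : ℝ)
      ≤ ((finrank K ↥(⨆ i, (W n).map (G i)) : ℕ) : ℝ)
        + (a : ℝ) * (((∑ p : Fin s × Fin a,
            finrank K ↥(rightMulSubmodule K (W n) (c p.1 p.2) ⊔ W n) : ℕ) : ℝ)
          - ((s * a : ℕ) : ℝ) * (finrank K ↥(W n) : ℝ)) := by
    have r4 : (finrank K ↥Vn : ℝ) - (finrank K ↥(W n) : ℝ)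
        ≤ ((∑ p : Fin s × Fin a,
            finrank K ↥(rightMulSubmodule K (W n) (c p.1 p.2) ⊔ W n) : ℕ) : ℝ)
          - ((s * a : ℕ) : ℝ) * (finrank K ↥(W n) : ℝ) := by linarith
    have r5 := mul_le_mul_of_nonneg_left r4 (Nat.cast_nonneg a : (0:ℝ) ≤ (a:ℝ))
    linarith
  rw [mul_div_assoc']
  rw [← add_div]
  gcongr

/-- The main comparison lemma: the rank of any finite family is at most the rank of a
generating family. -/
lemma key_le (hW : FolnerExhaustion K R W) (ω : Ultrafilter ℕ)
    (hω : (ω : Filter ℕ) ≤ Filter.cofinite) {a s : ℕ}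
    (x : Fin a → M) (hx : Submodule.span R (Set.range x) = ⊤) (u : Fin s → M) :
    ultralim ω (rankSeq K R W u) ≤ ultralim ω (rankSeq K R W x) := by
  obtain ⟨hmono, hfd, hexh, hconv⟩ := hW
  have hmem : ∀ j, u j ∈ Submodule.span R (Set.range x) := fun j => hx ▸ Submodule.mem_top
  choose c hc using fun j => (Submodule.mem_span_range_iff_exists_fun R).mp (hmem j)
  set g : ℕ → ℝ := fun n => a * ((∑ p : Fin s × Fin a,
      ((finrank K ↥(rightMulSubmodule K (W n) (c p.1 p.2) ⊔ W n) : ℝ)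
        - (finrank K ↥(W n) : ℝ))) / (finrank K ↥(W n) : ℝ)) with hg
  have hterm_le : ∀ n (p : Fin s × Fin a), (finrank K ↥(W n) : ℝ)
      ≤ (finrank K ↥(rightMulSubmodule K (W n) (c p.1 p.2) ⊔ W n) : ℝ) := by
    intro n p
    haveI := hfd n
    exact_mod_cast Submodule.finrank_mono
      (le_sup_right : W n ≤ rightMulSubmodule K (W n) (c p.1 p.2) ⊔ W n)
  have hg0 : ∀ n, 0 ≤ g n := by
    intro n
    apply mul_nonneg (Nat.cast_nonneg a)
    apply div_nonneg _ (Nat.cast_nonneg _)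
    exact Finset.sum_nonneg fun p _ => sub_nonneg.mpr (hterm_le n p)
  -- eventually `dim Wₙ ≥ 1`
  have hD : ∀ᶠ n in atTop, 1 ≤ finrank K ↥(W n) := by
    have h2 := (hconv 0).eventually (eventually_gt_nhds (by norm_num : (1/2 : ℝ) < 1))
    filter_upwards [h2] with n hn
    by_contra hlt
    push_neg at hlt
    have h0 : finrank K ↥(W n) = 0 := by omega
    rw [h0] at hn
    norm_num at hn
  -- `g → 0`
  have hgt : Tendsto g atTop (nhds 0) := by
    have hterm : Tendsto (fun n => ∑ p : Fin s × Fin a,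
        ((finrank K ↥(rightMulSubmodule K (W n) (c p.1 p.2) ⊔ W n) : ℝ)
          / (finrank K ↥(W n) : ℝ) - 1)) atTop (nhds 0) := by
      have h : ∀ p : Fin s × Fin a, p ∈ Finset.univ → Tendsto (fun n =>
          (finrank K ↥(rightMulSubmodule K (W n) (c p.1 p.2) ⊔ W n) : ℝ)
            / (finrank K ↥(W n) : ℝ) - 1) atTop (nhds ((fun _ : Fin s × Fin a => (0:ℝ)) p)) :=
        fun p _ => by simpa using (hconv (c p.1 p.2)).sub (tendsto_const_nhds (x := (1:ℝ)))
      simpa using tendsto_finset_sum Finset.univ h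
    have h2 : Tendsto (fun n => (a : ℝ) * ∑ p : Fin s × Fin a,
        ((finrank K ↥(rightMulSubmodule K (W n) (c p.1 p.2) ⊔ W n) : ℝ)
          / (finrank K ↥(W n) : ℝ) - 1)) atTop (nhds 0) := by
      simpa using hterm.const_mul (a : ℝ)
    apply Tendsto.congr' _ h2
    filter_upwards [hD] with n hn
    have hd : (finrank K ↥(W n) : ℝ) ≠ 0 := by
      have : (0:ℝ) < (finrank K ↥(W n) : ℝ) := by exact_mod_cast hn
      linarith
    rw [hg]
    congr 1
    rw [Finset.sum_div]
    exact Finset.sum_congr rfl fun p _ => by rw [sub_div, div_self hd]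
  have hpt : ∀ n, rankSeq K R W u n ≤ rankSeq K R W x n + g n :=
    fun n => key_pointwise hfd x u c hc n
  have Tu := tendsto_ultralim ω (fun n => rankSeq_nonneg u n)
    (fun n => rankSeq_le_card hfd u n)
  have Tx := tendsto_ultralim ω (fun n => rankSeq_nonneg x n)
    (fun n => rankSeq_le_card hfd x n)
  have Tg : Tendsto g (ω : Filter ℕ) (nhds 0) :=
    hgt.mono_left (by rwa [Nat.cofinite_eq_atTop] at hω)
  have h := le_of_tendsto_of_tendsto' Tu (Tx.add Tg) hpt
  simpa using h

/-- Independence of the rank from the choice of generating family. -/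
lemma rank_eq (hW : FolnerExhaustion K R W) (ω : Ultrafilter ℕ)
    (hω : (ω : Filter ℕ) ≤ Filter.cofinite) {a s : ℕ}
    (x : Fin a → M) (hx : Submodule.span R (Set.range x) = ⊤)
    (u : Fin s → M) (hu : Submodule.span R (Set.range u) = ⊤) :
    ultralim ω (rankSeq K R W u) = ultralim ω (rankSeq K R W x) :=
  le_antisymm (key_le hW ω hω x hx u) (key_le hW ω hω u hu x)

/-- Composition of the span maps with an `R`-linear map. -/
lemma tsm_comp (f : M →ₗ[R] N) (m : M) :
    (LinearMap.toSpanSingleton R N (f m)).restrictScalars K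
      = (f.restrictScalars K).comp ((LinearMap.toSpanSingleton R M m).restrictScalars K) := by
  ext r
  simp [LinearMap.toSpanSingleton_apply]

/-- Under an injective `R`-linear map, `rankSeq` is preserved. -/
lemma rankSeq_comp_inj (f : M →ₗ[R] N) (hf : Function.Injective f) {a : ℕ} (x : Fin a → M)
    (n : ℕ) : rankSeq K R W (fun i => f (x i)) n = rankSeq K R W x n := by
  unfold rankSeq
  congr 2
  have e : (⨆ i, (W n).map
      ((LinearMap.toSpanSingleton R N (f (x i))).restrictScalars K))
      = Submodule.map (f.restrictScalars K)
        (⨆ i, (W n).map ((LinearMap.toSpanSingleton R M (x i)).restrictScalars K)) := by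
    rw [Submodule.map_iSup]
    exact iSup_congr fun i => by rw [tsm_comp (K := K) f (x i), ← Submodule.map_comp]
  rw [e]
  exact ((Submodule.equivMapOfInjective (f.restrictScalars K) hf _).finrank_eq).symm

/-- Under any `R`-linear map, `rankSeq` does not increase. -/
lemma rankSeq_comp_le (hfd : ∀ n, FiniteDimensional K (W n)) (f : M →ₗ[R] N) {a : ℕ}
    (x : Fin a → M) (n : ℕ) :
    rankSeq K R W (fun i => f (x i)) n ≤ rankSeq K R W x n := by
  haveI := hfd n
  unfold rankSeq
  have e : (⨆ i, (W n).map
      ((LinearMap.toSpanSingleton R N (f (x i))).restrictScalars K))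
      = Submodule.map (f.restrictScalars K)
        (⨆ i, (W n).map ((LinearMap.toSpanSingleton R M (x i)).restrictScalars K)) := by
    rw [Submodule.map_iSup]
    exact iSup_congr fun i => by rw [tsm_comp (K := K) f (x i), ← Submodule.map_comp]
  rw [e]
  haveI : FiniteDimensional K
      ↥(⨆ i, (W n).map ((LinearMap.toSpanSingleton R M (x i)).restrictScalars K)) :=
    Submodule.finiteDimensional_iSup _
  have h := Submodule.finrank_map_le (f.restrictScalars K)
    (⨆ i, (W n).map ((LinearMap.toSpanSingleton R M (x i)).restrictScalars K))
  rcases eq_or_ne ((finrank K ↥(W n) : ℝ)) 0 with hd | hd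
  · rw [hd]
    simp
  · have hdpos : (0:ℝ) < (finrank K ↥(W n) : ℝ) :=
      lt_of_le_of_ne (Nat.cast_nonneg _) (Ne.symm hd)
    gcongr


/-- The appended family of generators for a product module. -/
lemma span_append_prod {a b : ℕ} (x : Fin a → M) (y : Fin b → N)
    (hx : Submodule.span R (Set.range x) = ⊤) (hy : Submodule.span R (Set.range y) = ⊤) :
    Submodule.span R (Set.range (Fin.append (fun i => ((x i, 0) : M × N))
      (fun j => ((0 : M), y j)))) = ⊤ := by
  set w := Fin.append (fun i => ((x i, 0) : M × N)) (fun j => ((0 : M), y j)) with hw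
  rw [eq_top_iff]
  rintro ⟨m, nn⟩ -
  have h1 : ((m, 0) : M × N) ∈ Submodule.span R (Set.range w) := by
    have hsub : Submodule.map (LinearMap.inl R M N) (Submodule.span R (Set.range x))
        ≤ Submodule.span R (Set.range w) := by
      rw [Submodule.map_span]
      apply Submodule.span_mono
      rintro - ⟨-, ⟨i, rfl⟩, rfl⟩
      exact ⟨Fin.castAdd b i, by simp [hw, Fin.append_left]⟩
    rw [hx] at hsub
    exact hsub (Submodule.mem_map.mpr ⟨m, trivial, rfl⟩)
  have h2 : ((0, nn) : M × N) ∈ Submodule.span R (Set.range w) := by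
    have hsub : Submodule.map (LinearMap.inr R M N) (Submodule.span R (Set.range y))
        ≤ Submodule.span R (Set.range w) := by
      rw [Submodule.map_span]
      apply Submodule.span_mono
      rintro - ⟨-, ⟨j, rfl⟩, rfl⟩
      exact ⟨Fin.natAdd a j, by simp [hw, Fin.append_right]⟩
    rw [hy] at hsub
    exact hsub (Submodule.mem_map.mpr ⟨nn, trivial, rfl⟩)
  have he : ((m, nn) : M × N) = (m, 0) + (0, nn) := by simp
  rw [he]
  exact add_mem h1 h2

/-- Additivity of `rankSeq` on the appended family. -/
lemma rankSeq_append (hfd : ∀ n, FiniteDimensional K (W n)) {a b : ℕ}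
    (x : Fin a → M) (y : Fin b → N) (n : ℕ) :
    rankSeq K R W (Fin.append (fun i => ((x i, 0) : M × N)) (fun j => ((0 : M), y j))) n
      = rankSeq K R W x n + rankSeq K R W y n := by
  haveI := hfd n
  unfold rankSeq
  rw [← add_div]
  congr 1
  set A := ⨆ i, (W n).map ((LinearMap.toSpanSingleton R M (x i)).restrictScalars K) with hA
  set B := ⨆ j, (W n).map ((LinearMap.toSpanSingleton R N (y j)).restrictScalars K) with hB
  haveI : FiniteDimensional K ↥A := by rw [hA]; exact Submodule.finiteDimensional_iSup _
  haveI : FiniteDimensional K ↥B := by rw [hB]; exact Submodule.finiteDimensional_iSup _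
  have hsplit : (⨆ k : Fin (a + b), (W n).map
      ((LinearMap.toSpanSingleton R (M × N)
        (Fin.append (fun i => ((x i, 0) : M × N)) (fun j => ((0 : M), y j)) k)).restrictScalars K))
      = Submodule.map (LinearMap.inl K M N) A ⊔ Submodule.map (LinearMap.inr K M N) B := by
    rw [iSup_fin_add]
    congr 1
    · rw [hA, Submodule.map_iSup]
      apply iSup_congr
      intro i
      rw [show (Fin.append (fun i => ((x i, 0) : M × N)) (fun j => ((0 : M), y j))
          (Fin.castAdd b i)) = (x i, 0) from Fin.append_left _ _ i]
      rw [show (LinearMap.toSpanSingleton R (M × N) ((x i, 0) : M × N)).restrictScalars K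
          = (LinearMap.inl K M N).comp
            ((LinearMap.toSpanSingleton R M (x i)).restrictScalars K) from by
        ext r <;> simp [LinearMap.toSpanSingleton_apply]]
      rw [Submodule.map_comp]
    · rw [hB, Submodule.map_iSup]
      apply iSup_congr
      intro j
      rw [show (Fin.append (fun i => ((x i, 0) : M × N)) (fun j => ((0 : M), y j))
          (Fin.natAdd a j)) = ((0 : M), y j) from Fin.append_right _ _ j]
      rw [show (LinearMap.toSpanSingleton R (M × N) (((0 : M), y j) : M × N)).restrictScalars K
          = (LinearMap.inr K M N).comp
            ((LinearMap.toSpanSingleton R N (y j)).restrictScalars K) from by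
        ext r <;> simp [LinearMap.toSpanSingleton_apply]]
      rw [Submodule.map_comp]
  rw [hsplit]
  have hinf : Submodule.map (LinearMap.inl K M N) A ⊓ Submodule.map (LinearMap.inr K M N) B
      = ⊥ := by
    rw [eq_bot_iff]
    intro z hz
    obtain ⟨mz, -, rfl⟩ := Submodule.mem_map.mp hz.1
    obtain ⟨nz, -, hnz⟩ := Submodule.mem_map.mp hz.2
    have hm : mz = 0 := by
      have := congrArg Prod.fst hnz
      simpa using this.symm
    simp [hm]
  have h := Submodule.finrank_sup_add_finrank_inf_eq
    (Submodule.map (LinearMap.inl K M N) A) (Submodule.map (LinearMap.inr K M N) B)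
  rw [hinf, finrank_bot, add_zero] at h
  have eA : finrank K ↥(Submodule.map (LinearMap.inl K M N) A) = finrank K ↥A :=
    ((Submodule.equivMapOfInjective (LinearMap.inl K M N) LinearMap.inl_injective A).finrank_eq).symm
  have eB : finrank K ↥(Submodule.map (LinearMap.inr K M N) B) = finrank K ↥B :=
    ((Submodule.equivMapOfInjective (LinearMap.inr K M N) LinearMap.inr_injective B).finrank_eq).symm
  rw [h, eA, eB]
  push_cast
  ring

end Main

/-- Monotonicity and additivity of the rank: (i) if `M` is a submodule or a homomorphic image
of `N` then `rank M ≤ rank N`; (ii) `rank (M ⊕ N) = rank M + rank N`. -/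
theorem rank_mono_and_additive (K : Type*) [Field K] (R : Type*) [Ring R] [Algebra K R]
    [Algebra.FiniteType K R]
    (W : ℕ → Submodule K R) (hW : FolnerExhaustion K R W)
    (ω : Ultrafilter ℕ) (hω : (ω : Filter ℕ) ≤ Filter.cofinite)
    (M : Type*) [AddCommGroup M] [Module K M] [Module R M] [IsScalarTower K R M]
    (N : Type*) [AddCommGroup N] [Module K N] [Module R N] [IsScalarTower K R N]
    {a b c : ℕ} (x : Fin a → M) (y : Fin b → N) (z : Fin c → M × N)
    (hx : Submodule.span R (Set.range x) = ⊤)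
    (hy : Submodule.span R (Set.range y) = ⊤)
    (hz : Submodule.span R (Set.range z) = ⊤) :
    ((∃ f : M →ₗ[R] N, Function.Injective f) ∨ (∃ f : N →ₗ[R] M, Function.Surjective f) →
      ultralim ω (rankSeq K R W x) ≤ ultralim ω (rankSeq K R W y)) ∧
    ultralim ω (rankSeq K R W z) =
      ultralim ω (rankSeq K R W x) + ultralim ω (rankSeq K R W y) := by
  have hfd := hW.2.1
  constructor
  · rintro (⟨f, hf⟩ | ⟨f, hf⟩)
    · have e : rankSeq K R W (fun i => f (x i)) = rankSeq K R W x :=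
        funext (rankSeq_comp_inj f hf x)
      rw [← e]
      exact key_le hW ω hω y hy (fun i => f (x i))
    · have hgen : Submodule.span R (Set.range (fun j => f (y j))) = ⊤ := by
        rw [show Set.range (fun j => f (y j)) = f '' Set.range y from Set.range_comp f y,
          Submodule.span_image, hy, Submodule.map_top]
        exact LinearMap.range_eq_top.mpr hf
      have e1 : ultralim ω (rankSeq K R W x)
          = ultralim ω (rankSeq K R W (fun j => f (y j))) :=
        rank_eq hW ω hω (fun j => f (y j)) hgen x hx
      rw [e1]
      have Tu := tendsto_ultralim ω (fun n => rankSeq_nonneg (fun j => f (y j)) n)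
        (fun n => rankSeq_le_card hfd (fun j => f (y j)) n)
      have Ty := tendsto_ultralim ω (fun n => rankSeq_nonneg y n)
        (fun n => rankSeq_le_card hfd y n)
      exact le_of_tendsto_of_tendsto' Tu Ty (fun n => rankSeq_comp_le hfd f y n)
  · have hgenw := span_append_prod x y hx hy
    have e1 : ultralim ω (rankSeq K R W z) = ultralim ω (rankSeq K R W
        (Fin.append (fun i => ((x i, 0) : M × N)) (fun j => ((0 : M), y j)))) :=
      rank_eq hW ω hω _ hgenw z hz
    rw [e1]
    have Tx := tendsto_ultralim ω (fun n => rankSeq_nonneg x n)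
      (fun n => rankSeq_le_card hfd x n)
    have Ty := tendsto_ultralim ω (fun n => rankSeq_nonneg y n)
      (fun n => rankSeq_le_card hfd y n)
    have Tw : Tendsto (rankSeq K R W (Fin.append (fun i => ((x i, 0) : M × N))
        (fun j => ((0 : M), y j)))) (ω : Filter ℕ)
        (nhds (ultralim ω (rankSeq K R W x) + ultralim ω (rankSeq K R W y))) :=
      (Tx.add Ty).congr fun n => (rankSeq_append hfd x y n).symm
    exact Tw.limUnder_eq
end
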